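/- Arrows comparison: if V→R ⪯_{𝒱,Γ} ∀X⃗.(U→T), then there exist types A⃗ and type variables Y⃗ with Y⃗ ∉ FV(Γ) such that U→T ≡ (V→R)[A⃗/Y⃗]. -/

import Mathlib

/- Types of λvec_R: general types and unit types (mutual) -/
mutual
inductive UTy (S : Type) : Type where
  | uvar : ℕ → UTy S
  | arrow : UTy S → Ty S → UTy S
  | fallU : ℕ → UTy S → UTy S
  | fallG : ℕ → UTy S → UTy S
inductive Ty (S : Type) : Type where
  | unit : UTy S → Ty S
  | smul : S → Ty S → Ty S
  | add : Ty S → Ty S → Ty S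
  | gvar : ℕ → Ty S
end

/- Type equivalence: the smallest congruence with the weak-module axioms -/
mutual
inductive UEquiv {S : Type} [CommRing S] : UTy S → UTy S → Prop where
  | refl (U : UTy S) : UEquiv U U
  | symm : UEquiv U V → UEquiv V U
  | trans : UEquiv U V → UEquiv V W → UEquiv U W
  | arrow : UEquiv U V → TEquiv T R → UEquiv (.arrow U T) (.arrow V R)
  | fallU : UEquiv U V → UEquiv (.fallU X U) (.fallU X V)
  | fallG : UEquiv U V → UEquiv (.fallG X U) (.fallG X V)
inductive TEquiv {S : Type} [CommRing S] : Ty S → Ty S → Prop where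
  | refl (T : Ty S) : TEquiv T T
  | symm : TEquiv T R → TEquiv R T
  | trans : TEquiv T R → TEquiv R P → TEquiv T P
  | unit : UEquiv U V → TEquiv (.unit U) (.unit V)
  | smul : TEquiv T R → TEquiv (.smul a T) (.smul a R)
  | addL : TEquiv T R → TEquiv (.add T P) (.add R P)
  | addR : TEquiv T R → TEquiv (.add P T) (.add P R)
  | one_smul (T : Ty S) : TEquiv (.smul 1 T) T
  | smul_smul : TEquiv (.smul a (.smul b T)) (.smul (a*b) T)
  | smul_add : TEquiv (.add (.smul a T) (.smul a R)) (.smul a (.add T R))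
  | add_smul : TEquiv (.add (.smul a T) (.smul b T)) (.smul (a+b) T)
  | comm : TEquiv (.add T R) (.add R T)
  | assoc : TEquiv (.add T (.add R P)) (.add (.add T R) P)
end

/- substitution of a unit type variable by a unit type -/
mutual
def UTy.substU {S : Type} : UTy S → ℕ → UTy S → UTy S
  | .uvar m, X, A => if m = X then A else .uvar m
  | .arrow U T, X, A => .arrow (U.substU X A) (T.substU X A)
  | .fallU m U, X, A => if m = X then .fallU m U else .fallU m (U.substU X A)
  | .fallG m U, X, A => .fallG m (U.substU X A)
def Ty.substU {S : Type} : Ty S → ℕ → UTy S → Ty S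
  | .unit U, X, A => .unit (U.substU X A)
  | .smul a T, X, A => .smul a (T.substU X A)
  | .add T R, X, A => .add (T.substU X A) (R.substU X A)
  | .gvar m, _, _ => .gvar m
end

/- substitution of a general type variable by a general type -/
mutual
def UTy.substG {S : Type} : UTy S → ℕ → Ty S → UTy S
  | .uvar m, _, _ => .uvar m
  | .arrow U T, X, A => .arrow (U.substG X A) (T.substG X A)
  | .fallU m U, X, A => .fallU m (U.substG X A)
  | .fallG m U, X, A => if m = X then .fallG m U else .fallG m (U.substG X A)
def Ty.substG {S : Type} : Ty S → ℕ → Ty S → Ty S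
  | .unit U, X, A => .unit (U.substG X A)
  | .smul a T, X, A => .smul a (T.substG X A)
  | .add T R, X, A => .add (T.substG X A) (R.substG X A)
  | .gvar m, X, A => if m = X then A else .gvar m
end

/- free type variables; a variable is (false, n) for a unit variable X_n
   and (true, n) for a general variable 𝕏_n -/
mutual
def UTy.fv {S : Type} : UTy S → Set (Bool × ℕ)
  | .uvar n => {(false, n)}
  | .arrow U T => U.fv ∪ T.fv
  | .fallU n U => U.fv \ {(false, n)}
  | .fallG n U => U.fv \ {(true, n)}
def Ty.fv {S : Type} : Ty S → Set (Bool × ℕ)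
  | .unit U => U.fv
  | .smul _ T => T.fv
  | .add T R => T.fv ∪ R.fv
  | .gvar n => {(true, n)}
end
/- a single substitution item: a type variable together with a type of the matching kind -/
inductive TSub (S : Type) : Type where
  | u : ℕ → UTy S → TSub S
  | g : ℕ → Ty S → TSub S

def TSub.var {S : Type} : TSub S → Bool × ℕ
  | .u X _ => (false, X)
  | .g X _ => (true, X)

def Ty.applySub {S : Type} : Ty S → TSub S → Ty S
  | T, .u X A => T.substU X A
  | T, .g X A => T.substG X A

def UTy.applySub {S : Type} : UTy S → TSub S → UTy S
  | U, .u X A => U.substU X A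
  | U, .g X A => U.substG X A

def Ty.applySubs {S : Type} (T : Ty S) (σ : List (TSub S)) : Ty S := σ.foldl Ty.applySub T
def UTy.applySubs {S : Type} (U : UTy S) (σ : List (TSub S)) : UTy S := σ.foldl UTy.applySub U

/- ∀X.U for a variable of either kind, and iterated foralls -/
def mkForall {S : Type} (X : Bool × ℕ) (U : UTy S) : UTy S :=
  if X.1 then .fallG X.2 U else .fallU X.2 U
def mkForalls {S : Type} (Xs : List (Bool × ℕ)) (U : UTy S) : UTy S := Xs.foldr mkForall U

/- the linear combination Σᵢ αᵢ·Tᵢ represented by a (nonempty) list of pairs -/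
def combo {S : Type} : List (S × Ty S) → Ty S
  | [] => .gvar 0
  | [p] => .smul p.1 p.2
  | p :: q :: L => .add (.smul p.1 p.2) (combo (q :: L))

/- sum of the scalars of a linear combination -/
def weightOf {S : Type} [CommRing S] {α : Type} (L : List (S × α)) : S := (L.map Prod.fst).sum

/- Terms of λvec_R -/
inductive Term (S : Type) : Type where
  | var : ℕ → Term S
  | lam : ℕ → Term S → Term S
  | app : Term S → Term S → Term S
  | smul : S → Term S → Term S
  | add : Term S → Term S → Term S

/- basis terms: variables and abstractions -/
inductive IsBasis {S : Type} : Term S → Prop where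
  | var : IsBasis (.var x)
  | lam : IsBasis (.lam x t)

def Term.fv {S : Type} : Term S → Set ℕ
  | .var x => {x}
  | .lam x t => t.fv \ {x}
  | .app t r => t.fv ∪ r.fv
  | .smul _ t => t.fv
  | .add t r => t.fv ∪ r.fv

/- term substitution t[b/x] -/
def Term.subst {S : Type} : Term S → ℕ → Term S → Term S
  | .var y, x, b => if y = x then b else .var y
  | .lam y t, x, b => if y = x then .lam y t else .lam y (t.subst x b)
  | .app t r, x, b => .app (t.subst x b) (r.subst x b)
  | .smul a t, x, b => .smul a (t.subst x b)
  | .add t r, x, b => .add (t.subst x b) (r.subst x b)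

/- typing contexts: partial maps from term variables to unit types -/
def Ctx (S : Type) : Type := ℕ → Option (UTy S)

def Ctx.update {S : Type} (Γ : Ctx S) (x : ℕ) (U : UTy S) : Ctx S :=
  fun y => if y = x then some U else Γ y

def Ctx.fv {S : Type} (Γ : Ctx S) : Set (Bool × ℕ) :=
  {v | ∃ x U, Γ x = some U ∧ v ∈ UTy.fv U}

def Ctx.applySub {S : Type} (Γ : Ctx S) (s : TSub S) : Ctx S :=
  fun x => (Γ x).map (fun U => U.applySub s)
/- Sized typing judgement: `TypesN n Γ t T` means Γ ⊢ t : T has a derivation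
   with n sequents. -/
inductive TypesN {S : Type} [CommRing S] : ℕ → Ctx S → Term S → Ty S → Prop where
  | ax : Γ x = some U → TypesN 1 Γ (.var x) (.unit U)
  | equiv : TypesN n Γ t T → TEquiv T R → TypesN (n+1) Γ t R
  | arrI : TypesN n (Γ.update x U) t T → TypesN (n+1) Γ (.lam x t) (.unit (.arrow U T))
  | arrE (Xs : List (Bool × ℕ)) (U : UTy S) (L : List (S × Ty S)) (M : List (S × List (TSub S))) :
      L ≠ [] → M ≠ [] →
      (∀ q ∈ M, q.2.map TSub.var = Xs) →
      TypesN n Γ t (combo (L.map fun p => (p.1, Ty.unit (mkForalls Xs (.arrow U p.2))))) →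
      TypesN m Γ r (combo (M.map fun q => (q.1, (Ty.unit U).applySubs q.2))) →
      TypesN (n+m+1) Γ (.app t r)
        (combo (L.flatMap fun p => M.map fun q => (p.1 * q.1, p.2.applySubs q.2)))
  | fallI (L : List (S × UTy S)) (X : Bool × ℕ) :
      L ≠ [] → X ∉ Γ.fv →
      TypesN n Γ t (combo (L.map fun p => (p.1, Ty.unit p.2))) →
      TypesN (n+1) Γ t (combo (L.map fun p => (p.1, Ty.unit (mkForall X p.2))))
  | fallE (L : List (S × UTy S)) (s : TSub S) :
      L ≠ [] →
      TypesN n Γ t (combo (L.map fun p => (p.1, Ty.unit (mkForall s.var p.2)))) →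
      TypesN (n+1) Γ t (combo (L.map fun p => (p.1, (Ty.unit p.2).applySub s)))
  | addI : TypesN n Γ t T → TypesN m Γ r R → TypesN (n+m+1) Γ (.add t r) (.add T R)
  | oneE : TypesN n Γ (.smul 1 t) T → TypesN (n+1) Γ t T
  | sum (L : List (ℕ × S × Ty S)) :
      L ≠ [] →
      (∀ p ∈ L, TypesN p.1 Γ t p.2.2) →
      TypesN ((L.map Prod.fst).sum + 1) Γ (.smul (weightOf (L.map Prod.snd)) t)
        (combo (L.map Prod.snd))

/- the typing judgement Γ ⊢ t : T -/
def Types {S : Type} [CommRing S] (Γ : Ctx S) (t : Term S) (T : Ty S) : Prop :=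
  ∃ n, TypesN n Γ t T

/- the relation ≺_{X,Γ} -/
inductive Prec {S : Type} [CommRing S] (Γ : Ctx S) : (Bool × ℕ) → Ty S → Ty S → Prop where
  | intro (X : Bool × ℕ) (L : List (S × UTy S)) :
      X ∉ Γ.fv → L ≠ [] →
      TEquiv R (combo (L.map fun p => (p.1, Ty.unit p.2))) →
      TEquiv T (combo (L.map fun p => (p.1, Ty.unit (mkForall X p.2)))) →
      Prec Γ X R T
  | elim (s : TSub S) (L : List (S × UTy S)) :
      s.var ∉ Γ.fv → L ≠ [] →
      TEquiv R (combo (L.map fun p => (p.1, Ty.unit (mkForall s.var p.2)))) →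
      TEquiv T (combo (L.map fun p => (p.1, (Ty.unit p.2).applySub s))) →
      Prec Γ s.var R T

/- the relation ⪯_{𝒱,Γ} -/
inductive Preceq {S : Type} [CommRing S] (Γ : Ctx S) : Set (Bool × ℕ) → Ty S → Ty S → Prop where
  | prec : V ∩ Γ.fv = ∅ → Prec Γ X R T → Preceq Γ (V ∪ {X}) R T
  | trans : Preceq Γ V₁ A B → Preceq Γ V₂ B C → Preceq Γ (V₁ ∪ V₂) A C
  | equiv : V ∩ Γ.fv = ∅ → TEquiv R T → Preceq Γ V R T

/- the reduction relation → -/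
inductive Step {S : Type} [CommRing S] : Term S → Term S → Prop where
  -- Group E
  | oneSmul : Step (.smul 1 t) t
  | smulSmul : Step (.smul a (.smul b t)) (.smul (a*b) t)
  | smulAdd : Step (.smul a (.add t r)) (.add (.smul a t) (.smul a r))
  -- Group F
  | factor : Step (.add (.smul a t) (.smul b t)) (.smul (a+b) t)
  | factorOne : Step (.add (.smul a t) t) (.smul (a+1) t)
  | factorNone : Step (.add t t) (.smul (1+1) t)
  -- Group B
  | beta : IsBasis b → Step (.app (.lam x t) b) (t.subst x b)
  -- Group A
  | appAddL : Step (.app (.add t r) u) (.add (.app t u) (.app r u))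
  | appAddR : Step (.app t (.add r u)) (.add (.app t r) (.app t u))
  | appSmulL : Step (.app (.smul a t) r) (.smul a (.app t r))
  | appSmulR : Step (.app t (.smul a r)) (.smul a (.app t r))
  -- contextual rules
  | ctxSmul : Step t r → Step (.smul a t) (.smul a r)
  | ctxAddR : Step t r → Step (.add u t) (.add u r)
  | ctxAppR : Step t r → Step (.app u t) (.app u r)
  | ctxAppL : Step t r → Step (.app t u) (.app r u)
  | ctxLam : Step t r → Step (.lam x t) (.lam x r)

/- values: sums (in any association) of pairwise-distinct abstractions, possibly scaled -/
inductive SumOf {S : Type} : Term S → List (Term S) → Prop where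
  | leaf (t : Term S) : SumOf t [t]
  | add : SumOf t L → SumOf r M → SumOf (.add t r) (L ++ M)

inductive VEntry {S : Type} : Term S → Prop where
  | lam : VEntry (.lam x t)
  | smul : VEntry (.smul a (.lam x t))

def lamOf {S : Type} : Term S → Term S
  | .smul _ b => b
  | b => b

def IsValue {S : Type} (t : Term S) : Prop :=
  ∃ L : List (Term S), SumOf t L ∧ (∀ e ∈ L, VEntry e) ∧ (L.map lamOf).Pairwise (· ≠ ·)

/- weight of types and of terms -/
def Ty.weight {S : Type} [CommRing S] : Ty S → S
  | .unit _ => 1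
  | .gvar _ => 1
  | .smul a T => a * T.weight
  | .add T R => T.weight + R.weight

def Term.weight {S : Type} [CommRing S] : Term S → S
  | .var _ => 1
  | .lam _ _ => 1
  | .app _ _ => 1
  | .smul a t => a * t.weight
  | .add t r => t.weight + r.weight

/-
Call a unit type a generalized instance of V → R when it is ≡ to ∀Y⃗.(V → R)[σ] with all of Y⃗ and
the variables of σ outside FV(Γ). Every step of ⪯ preserves "every unit summand is a generalized
instance". For ≡ this holds because the axioms only rescale and regroup summands. Introducing ∀X
prepends X to Y⃗. Eliminating ∀X from ∀Y⃗.(V → R)[σ] removes the first binder (Y⃗ is nonempty since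
a ∀ is never ≡ an arrow), and the substitution is then either blocked by a later binder of the same
variable or appended to σ. At the end ∀X⃗.(U → T) ≡ ∀Y⃗.(V → R)[σ], and since ≡ preserves head
constructors, U → T ≡ (V → R)[σ].
-/

section
variable {S : Type}

theorem UTy.applySub_arrow (U : UTy S) (T : Ty S) (s : TSub S) :
    (UTy.arrow U T).applySub s = .arrow (U.applySub s) (T.applySub s) := by
  cases s <;> rfl

theorem Ty.applySub_unit (U : UTy S) (s : TSub S) :
    (Ty.unit U).applySub s = .unit (U.applySub s) := by
  cases s <;> rfl

theorem Ty.applySub_smul (a : S) (T : Ty S) (s : TSub S) :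
    (Ty.smul a T).applySub s = .smul a (T.applySub s) := by
  cases s <;> rfl

theorem Ty.applySub_add (T R : Ty S) (s : TSub S) :
    (Ty.add T R).applySub s = .add (T.applySub s) (R.applySub s) := by
  cases s <;> rfl

theorem UTy.applySub_mkForall (Y : Bool × ℕ) (U : UTy S) (s : TSub S) :
    (mkForall Y U).applySub s = mkForall Y (if Y = s.var then U else U.applySub s) := by
  obtain ⟨_ | _, n⟩ := Y <;> cases s <;>
    simp only [mkForall, UTy.applySub, UTy.substU, UTy.substG, TSub.var, Bool.false_eq_true,
      ↓reduceIte, Prod.mk.injEq, true_and, false_and, eq_comm] <;> split_ifs <;> rfl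

theorem UTy.applySubs_arrow (U : UTy S) (T : Ty S) (σ : List (TSub S)) :
    (UTy.arrow U T).applySubs σ = .arrow (U.applySubs σ) (T.applySubs σ) := by
  induction σ generalizing U T with
  | nil => rfl
  | cons s σ ih => exact (congrArg (·.applySubs σ) (UTy.applySub_arrow U T s)).trans (ih _ _)

theorem UTy.applySubs_concat (U : UTy S) (σ : List (TSub S)) (s : TSub S) :
    U.applySubs (σ ++ [s]) = (U.applySubs σ).applySub s :=
  List.foldl_concat ..

theorem UTy.applySub_mkForalls (Ys : List (Bool × ℕ)) (U : UTy S) (s : TSub S) :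
    (mkForalls Ys U).applySub s = mkForalls Ys U ∨
      (mkForalls Ys U).applySub s = mkForalls Ys (U.applySub s) := by
  induction Ys with
  | nil => exact .inr rfl
  | cons Y Ys ih =>
    change (mkForall Y (mkForalls Ys U)).applySub s = mkForall Y (mkForalls Ys U) ∨
      (mkForall Y (mkForalls Ys U)).applySub s = mkForall Y (mkForalls Ys (U.applySub s))
    rw [UTy.applySub_mkForall]
    split_ifs
    · exact .inl rfl
    · exact ih.imp (congrArg _) (congrArg _)

def Ty.AllUnits (P : UTy S → Prop) : Ty S → Prop
  | .unit U => P U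
  | .smul _ T => T.AllUnits P
  | .add T R => T.AllUnits P ∧ R.AllUnits P
  | .gvar _ => True

theorem Ty.allUnits_combo (P : UTy S → Prop) {L : List (S × Ty S)} (hL : L ≠ []) :
    (combo L).AllUnits P ↔ ∀ p ∈ L, p.2.AllUnits P := by
  induction L with
  | nil => exact absurd rfl hL
  | cons p L ih =>
    cases L with
    | nil => simp [combo, Ty.AllUnits]
    | cons q L => simp [combo, Ty.AllUnits, ih]
end

section
variable {S : Type} [CommRing S]

def UTy.HeadEquiv : UTy S → UTy S → Prop
  | .uvar n, .uvar m => n = m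
  | .arrow U T, .arrow V R => UEquiv U V ∧ TEquiv T R
  | .fallU n U, .fallU m V => n = m ∧ UEquiv U V
  | .fallG n U, .fallG m V => n = m ∧ UEquiv U V
  | _, _ => False

theorem UTy.HeadEquiv.refl : ∀ U : UTy S, U.HeadEquiv U
  | .uvar _ => rfl
  | .arrow _ _ => ⟨.refl _, .refl _⟩
  | .fallU _ _ => ⟨rfl, .refl _⟩
  | .fallG _ _ => ⟨rfl, .refl _⟩

theorem UTy.HeadEquiv.symm : ∀ {U V : UTy S}, U.HeadEquiv V → V.HeadEquiv U
  | .uvar _, .uvar _, h => Eq.symm h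
  | .arrow _ _, .arrow _ _, ⟨hU, hT⟩ => ⟨hU.symm, hT.symm⟩
  | .fallU _ _, .fallU _ _, ⟨hX, hU⟩ => ⟨hX.symm, hU.symm⟩
  | .fallG _ _, .fallG _ _, ⟨hX, hU⟩ => ⟨hX.symm, hU.symm⟩

theorem UTy.HeadEquiv.trans : ∀ {U V W : UTy S}, U.HeadEquiv V → V.HeadEquiv W → U.HeadEquiv W
  | .uvar _, .uvar _, .uvar _, h₁, h₂ => Eq.trans h₁ h₂
  | .arrow _ _, .arrow _ _, .arrow _ _, ⟨hU₁, hT₁⟩, ⟨hU₂, hT₂⟩ => ⟨hU₁.trans hU₂, hT₁.trans hT₂⟩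
  | .fallU _ _, .fallU _ _, .fallU _ _, ⟨hX₁, hU₁⟩, ⟨hX₂, hU₂⟩ => ⟨hX₁.trans hX₂, hU₁.trans hU₂⟩
  | .fallG _ _, .fallG _ _, .fallG _ _, ⟨hX₁, hU₁⟩, ⟨hX₂, hU₂⟩ => ⟨hX₁.trans hX₂, hU₁.trans hU₂⟩

theorem UEquiv.headEquiv {U V : UTy S} : UEquiv U V → U.HeadEquiv V
  | .refl _ => .refl _
  | .symm h => h.headEquiv.symm
  | .trans h₁ h₂ => h₁.headEquiv.trans h₂.headEquiv
  | .arrow h₁ h₂ => ⟨h₁, h₂⟩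
  | .fallU h => ⟨rfl, h⟩
  | .fallG h => ⟨rfl, h⟩

theorem mkForall_not_uequiv_arrow (Y : Bool × ℕ) (W V : UTy S) (R : Ty S) :
    ¬ UEquiv (mkForall Y W) (.arrow V R) := fun h => by
  have := h.headEquiv
  unfold mkForall at this
  split at this <;> exact this

theorem UEquiv.of_mkForall {X Y : Bool × ℕ} {U V : UTy S}
    (h : UEquiv (_root_.mkForall X U) (_root_.mkForall Y V)) : UEquiv U V := by
  have := h.headEquiv
  obtain ⟨_ | _, _⟩ := X <;> obtain ⟨_ | _, _⟩ := Y <;>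
    simp only [_root_.mkForall, UTy.HeadEquiv] at this <;> first | exact this.2 | exact this.elim

theorem UEquiv.of_mkForalls_arrow {Xs Ys : List (Bool × ℕ)} {U V : UTy S} {T R : Ty S}
    (h : UEquiv (mkForalls Xs (.arrow U T)) (mkForalls Ys (.arrow V R))) :
    UEquiv (.arrow U T) (.arrow V R) := by
  induction Xs generalizing Ys with
  | nil =>
    cases Ys with
    | nil => exact h
    | cons Y Ys => exact absurd h.symm (mkForall_not_uequiv_arrow _ _ _ _)
  | cons X Xs ih =>
    cases Ys with
    | nil => exact absurd h (mkForall_not_uequiv_arrow _ _ _ _)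
    | cons Y Ys => exact ih (UEquiv.of_mkForall h)

theorem UEquiv.mkForall (Y : Bool × ℕ) {U V : UTy S} (h : UEquiv U V) :
    UEquiv (mkForall Y U) (mkForall Y V) := by
  unfold _root_.mkForall
  split
  exacts [h.fallG, h.fallU]

theorem UEquiv.applySub_mkForall {U V : UTy S} (Y : Bool × ℕ) (s : TSub S) (h : UEquiv U V)
    (hs : UEquiv (U.applySub s) (V.applySub s)) :
    UEquiv ((_root_.mkForall Y U).applySub s) ((_root_.mkForall Y V).applySub s) := by
  rw [UTy.applySub_mkForall, UTy.applySub_mkForall]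
  split_ifs
  exacts [h.mkForall Y, hs.mkForall Y]

mutual
theorem UEquiv.applySub {U V : UTy S} (s : TSub S) :
    UEquiv U V → UEquiv (U.applySub s) (V.applySub s)
  | .refl _ => .refl _
  | .symm h => (h.applySub s).symm
  | .trans h₁ h₂ => (h₁.applySub s).trans (h₂.applySub s)
  | .arrow h₁ h₂ => by
    rw [UTy.applySub_arrow, UTy.applySub_arrow]
    exact (h₁.applySub s).arrow (h₂.applySub s)
  | .fallU (X := X) h => h.applySub_mkForall (false, X) s (h.applySub s)
  | .fallG (X := X) h => h.applySub_mkForall (true, X) s (h.applySub s)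
theorem TEquiv.applySub {T R : Ty S} (s : TSub S) :
    TEquiv T R → TEquiv (T.applySub s) (R.applySub s)
  | .refl _ => .refl _
  | .symm h => (h.applySub s).symm
  | .trans h₁ h₂ => (h₁.applySub s).trans (h₂.applySub s)
  | .unit h => by
    rw [Ty.applySub_unit, Ty.applySub_unit]
    exact .unit (h.applySub s)
  | .smul h => by
    simp only [Ty.applySub_smul]
    exact .smul (h.applySub s)
  | .addL h => by
    simp only [Ty.applySub_add]
    exact .addL (h.applySub s)
  | .addR h => by
    simp only [Ty.applySub_add]
    exact .addR (h.applySub s)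
  | .one_smul _ => by simp only [Ty.applySub_smul]; exact .one_smul _
  | .smul_smul => by simp only [Ty.applySub_smul]; exact .smul_smul
  | .smul_add => by simp only [Ty.applySub_smul, Ty.applySub_add]; exact .smul_add
  | .add_smul => by simp only [Ty.applySub_smul, Ty.applySub_add]; exact .add_smul
  | .comm => by simp only [Ty.applySub_add]; exact .comm
  | .assoc => by simp only [Ty.applySub_add]; exact .assoc
end

theorem TEquiv.allUnits_iff {P : UTy S → Prop} (hP : ∀ {U V}, UEquiv U V → P U → P V)
    {T R : Ty S} : TEquiv T R → (T.AllUnits P ↔ R.AllUnits P)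
  | .refl _ => .rfl
  | .symm h => (h.allUnits_iff hP).symm
  | .trans h₁ h₂ => (h₁.allUnits_iff hP).trans (h₂.allUnits_iff hP)
  | .unit h => ⟨hP h, hP h.symm⟩
  | .smul h => h.allUnits_iff hP
  | .addL h => and_congr_left' (h.allUnits_iff hP)
  | .addR h => and_congr_right' (h.allUnits_iff hP)
  | .one_smul _ | .smul_smul => .rfl
  | .smul_add | .add_smul => by simp [Ty.AllUnits]
  | .comm => and_comm
  | .assoc => and_assoc.symm

def IsGeneralizedInstance (Γ : Ctx S) (V : UTy S) (R : Ty S) (W : UTy S) : Prop :=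
  ∃ (Ys : List (Bool × ℕ)) (σ : List (TSub S)), (∀ Y ∈ Ys, Y ∉ Γ.fv) ∧
    (∀ s ∈ σ, s.var ∉ Γ.fv) ∧ UEquiv W (mkForalls Ys ((UTy.arrow V R).applySubs σ))

variable {Γ : Ctx S} {V : UTy S} {R : Ty S}

theorem IsGeneralizedInstance.of_uequiv {W W' : UTy S} (h : UEquiv W W')
    (hW : IsGeneralizedInstance Γ V R W) : IsGeneralizedInstance Γ V R W' := by
  obtain ⟨Ys, σ, hYs, hσ, hW⟩ := hW
  exact ⟨Ys, σ, hYs, hσ, h.symm.trans hW⟩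

theorem IsGeneralizedInstance.mkForall {X : Bool × ℕ} {W : UTy S} (hX : X ∉ Γ.fv)
    (hW : IsGeneralizedInstance Γ V R W) : IsGeneralizedInstance Γ V R (mkForall X W) := by
  obtain ⟨Ys, σ, hYs, hσ, hW⟩ := hW
  exact ⟨X :: Ys, σ, List.forall_mem_cons.2 ⟨hX, hYs⟩, hσ, hW.mkForall X⟩

theorem IsGeneralizedInstance.applySub {s : TSub S} {W : UTy S} (hs : s.var ∉ Γ.fv)
    (hW : IsGeneralizedInstance Γ V R (_root_.mkForall s.var W)) :
    IsGeneralizedInstance Γ V R (W.applySub s) := by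
  obtain ⟨Ys, σ, hYs, hσ, hW⟩ := hW
  cases Ys with
  | nil => exact (mkForall_not_uequiv_arrow _ _ _ _ (UTy.applySubs_arrow V R σ ▸ hW)).elim
  | cons Y Ys =>
    have hYs' : ∀ Y ∈ Ys, Y ∉ Γ.fv := fun Y hY => hYs Y (List.mem_cons_of_mem _ hY)
    have hWs := (UEquiv.of_mkForall hW).applySub s
    rcases UTy.applySub_mkForalls Ys ((UTy.arrow V R).applySubs σ) s with hfix | hsub
    · exact ⟨Ys, σ, hYs', hσ, hfix ▸ hWs⟩
    · refine ⟨Ys, σ ++ [s], hYs', ?_, ?_⟩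
      · exact List.forall_mem_append.2 ⟨hσ, by simpa using hs⟩
      · rwa [UTy.applySubs_concat, ← hsub]

theorem Prec.allUnits_isGeneralizedInstance {X : Bool × ℕ} {A B : Ty S} (h : Prec Γ X A B)
    (hA : A.AllUnits (IsGeneralizedInstance Γ V R)) :
    B.AllUnits (IsGeneralizedInstance Γ V R) := by
  have hP := @IsGeneralizedInstance.of_uequiv _ _ Γ V R
  cases h with
  | intro X L hX hL hA' hB' =>
    rw [hA'.allUnits_iff hP, Ty.allUnits_combo _ (by simpa using hL)] at hA
    rw [hB'.allUnits_iff hP, Ty.allUnits_combo _ (by simpa using hL)]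
    simp only [List.forall_mem_map] at hA ⊢
    exact fun p hp => (hA p hp).mkForall hX
  | elim s L hs hL hA' hB' =>
    rw [hA'.allUnits_iff hP, Ty.allUnits_combo _ (by simpa using hL)] at hA
    rw [hB'.allUnits_iff hP, Ty.allUnits_combo _ (by simpa using hL)]
    simp only [List.forall_mem_map, Ty.applySub_unit] at hA ⊢
    exact fun p hp => (hA p hp).applySub hs

theorem Preceq.allUnits_isGeneralizedInstance {𝒱 : Set (Bool × ℕ)} {A B : Ty S}
    (h : Preceq Γ 𝒱 A B) (hA : A.AllUnits (IsGeneralizedInstance Γ V R)) :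
    B.AllUnits (IsGeneralizedInstance Γ V R) := by
  induction h with
  | prec _ h => exact h.allUnits_isGeneralizedInstance hA
  | trans _ _ ih₁ ih₂ => exact ih₂ (ih₁ hA)
  | equiv _ h => exact (h.allUnits_iff IsGeneralizedInstance.of_uequiv).1 hA

end

theorem arrows_comparison {S : Type} [CommRing S]
    (Γ : Ctx S) (𝒱 : Set (Bool × ℕ)) (V : UTy S) (R : Ty S)
    (Xs : List (Bool × ℕ)) (U : UTy S) (T : Ty S)
    (h : Preceq Γ 𝒱 (Ty.unit (.arrow V R)) (Ty.unit (mkForalls Xs (.arrow U T)))) :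
    ∃ σ : List (TSub S),
      (∀ s ∈ σ, TSub.var s ∉ Γ.fv) ∧
      UEquiv (UTy.arrow U T) ((UTy.arrow V R).applySubs σ) := by
  have hVR : IsGeneralizedInstance Γ V R (.arrow V R) :=
    ⟨[], [], by simp, by simp, .refl _⟩
  obtain ⟨Ys, σ, -, hσ, hUT⟩ := h.allUnits_isGeneralizedInstance hVR
  refine ⟨σ, hσ, ?_⟩
  rw [UTy.applySubs_arrow] at hUT ⊢
  exact hUT.of_mkForalls_arrow
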